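/- arXiv:1005.3758 — 2 statements merged into one kernel-verified Lean document; each statement's English description precedes it below -/
import Mathlib

section
/- In the diffusion-approximation setup, the following limits hold as m → ∞: (a) m·(1 − q_λ^{(m)}) → κ_λ/σ²; (b) m²·(q_λ^{(m)} − β_λ^{(m)}) → −(Λ_λ² − κ_λ²)/(2σ⁴) and m·(1 − β_λ^{(m)}) → κ_λ/σ²; (c) m·x₀^{(m)} → −(Λ_λ − κ_λ)/σ² and m²·Γ^{(m)} → (Λ_λ − κ_λ)²/(2σ⁴); (d) m·(1 − d^{(m),S}) → (Λ_λ + κ_λ)/(2σ²); (e) m·(1 − d^{(m),T}) → Λ_λ/σ² and m²·x₀^{(m)}·(1 − d^{(m),T}) → −Λ_λ·(Λ_λ − κ_λ)/σ⁴. -/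
/-!
With `ε = 1 / (σ² m)` one has `β_λ = 1 - κ_λ ε` and, by second-order Taylor expansion,
`q_λ = exp (λ log (1 - κ_A ε) + (1 - λ) log (1 - κ_H ε)) = 1 - κ_λ ε + (κ_λ² - Λ_λ²) ε²/2 + o(ε²)`,
which gives (a) and (b). Writing `x = -v / m` in the fixed-point equation, the function
`v ↦ m² (q_λ e^{-v/m} - β_λ + v/m)` is convex and tends to `((v + κ_λ/σ²)² - (Λ_λ/σ²)²) / 2`.
As `|κ_λ| < Λ_λ` (strict Jensen), this limit is negative at `0` and has the single positive root
`(Λ_λ - κ_λ)/σ²`, and convexity traps `-m x₀` near it, which is (c). Parts (d) and (e) then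
follow from `q_λ e^{x₀} = x₀ + β_λ`.
-/

open Real Filter Topology Set

theorem tendsto_taylor_two_div_sq {f f' : ℝ → ℝ} {a A : ℝ}
    (hf : ∀ᶠ x in 𝓝 a, HasDerivAt f (f' x) x) (hf' : HasDerivAt f' A a) :
    Tendsto (fun x => (f x - f a - f' a * (x - a)) / (x - a) ^ 2) (𝓝[≠] a) (𝓝 (A / 2)) := by
  have hslope : Tendsto (fun x => (f' x - f' a) / (2 * (x - a))) (𝓝[≠] a) (𝓝 (A / 2)) := by
    refine ((hasDerivAt_iff_tendsto_slope.mp hf').div_const 2).congr fun x => ?_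
    rw [slope_def_field, div_div, mul_comm]
  refine HasDerivAt.lhopital_zero_nhdsNE ?_ ?_ ?_ ?_ ?_ hslope
  · filter_upwards [nhdsWithin_le_nhds hf] with x hx
    exact (hx.sub_const _).sub (((hasDerivAt_id x).sub_const a).const_mul (f' a)) |>.congr_deriv
      (by ring)
  · filter_upwards with x
    exact (((hasDerivAt_id x).sub_const a).fun_pow 2).congr_deriv (by simp)
  · filter_upwards [self_mem_nhdsWithin] with x hx
    exact mul_ne_zero two_ne_zero (sub_ne_zero.2 hx)
  · have hc : ContinuousAt (fun x => f x - f a - f' a * (x - a)) a :=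
      (hf.self_of_nhds.continuousAt.sub continuousAt_const).sub
        (continuousAt_const.mul (continuousAt_id.sub continuousAt_const))
    simpa using hc.tendsto.mono_left nhdsWithin_le_nhds
  · have hc : ContinuousAt (fun x : ℝ => (x - a) ^ 2) a := by fun_prop
    simpa using hc.tendsto.mono_left nhdsWithin_le_nhds

theorem tendsto_pow_mul_comp_of_tendsto_div_pow {ι : Type*} {l : Filter ι} {φ : ℝ → ℝ}
    {k : ℕ} {L w : ℝ} {c t : ι → ℝ} (hk : k ≠ 0) (hφ0 : φ 0 = 0)
    (hφ : Tendsto (fun x => φ x / x ^ k) (𝓝[≠] 0) (𝓝 L)) (ht : Tendsto t l (𝓝 0))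
    (hct : Tendsto (fun n => c n * t n) l (𝓝 w)) :
    Tendsto (fun n => c n ^ k * φ (t n)) l (𝓝 (w ^ k * L)) := by
  classical
  set r := Function.update (fun x => φ x / x ^ k) 0 L
  have hr : Tendsto r (𝓝 0) (𝓝 L) := by
    simpa only [r, Function.update_self] using (continuousAt_update_same.2 hφ).tendsto
  have hφr : ∀ x, φ x = x ^ k * r x := by
    intro x
    rcases eq_or_ne x 0 with rfl | hx
    · simp [hφ0, hk]
    · simp only [r, Function.update_of_ne hx]
      field_simp
  refine ((hct.pow k).mul (hr.comp ht)).congr fun n => ?_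
  rw [Function.comp_apply, hφr, mul_pow, mul_assoc]

theorem tendsto_sq_mul_taylor_two {ι : Type*} {l : Filter ι} {f f' : ℝ → ℝ} {A w : ℝ}
    {c t : ι → ℝ} (hf : ∀ᶠ x in 𝓝 0, HasDerivAt f (f' x) x) (hf' : HasDerivAt f' A 0)
    (ht : Tendsto t l (𝓝 0)) (hct : Tendsto (fun n => c n * t n) l (𝓝 w)) :
    Tendsto (fun n => c n ^ 2 * (f (t n) - f 0 - f' 0 * t n)) l (𝓝 (w ^ 2 * (A / 2))) :=
  tendsto_pow_mul_comp_of_tendsto_div_pow (φ := fun x => f x - f 0 - f' 0 * x) two_ne_zero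
    (by simp) (by simpa using tendsto_taylor_two_div_sq hf hf') ht hct

noncomputable def logGeomMean (κA κH lam ε : ℝ) : ℝ :=
  lam * log (1 - κA * ε) + (1 - lam) * log (1 - κH * ε)

section logGeomMean

variable {κA κH lam : ℝ}

theorem logGeomMean_zero : logGeomMean κA κH lam 0 = 0 := by
  simp [logGeomMean]

theorem exp_logGeomMean {ε : ℝ} (hA : 0 < 1 - κA * ε) (hH : 0 < 1 - κH * ε) :
    exp (logGeomMean κA κH lam ε) = (1 - κA * ε) ^ lam * (1 - κH * ε) ^ (1 - lam) := by
  rw [logGeomMean, exp_add, rpow_def_of_pos hA, rpow_def_of_pos hH, mul_comm lam,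
    mul_comm (1 - lam)]

theorem hasDerivAt_logGeomMean {x : ℝ} (hA : 1 - κA * x ≠ 0) (hH : 1 - κH * x ≠ 0) :
    HasDerivAt (logGeomMean κA κH lam)
      (-(lam * (κA / (1 - κA * x)) + (1 - lam) * (κH / (1 - κH * x)))) x := by
  have hlin : ∀ κ : ℝ, HasDerivAt (fun y => 1 - κ * y) (-κ) x := fun κ => by
    simpa using ((hasDerivAt_id x).const_mul κ).const_sub 1
  exact ((((hlin κA).log hA).const_mul lam).fun_add
    (((hlin κH).log hH).const_mul (1 - lam))).congr_deriv (by ring)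

theorem hasDerivAt_deriv_logGeomMean_zero :
    HasDerivAt (fun x => -(lam * (κA / (1 - κA * x)) + (1 - lam) * (κH / (1 - κH * x))))
      (-(lam * κA ^ 2 + (1 - lam) * κH ^ 2)) 0 := by
  have hinv : ∀ κ : ℝ, HasDerivAt (fun y => κ / (1 - κ * y)) (κ ^ 2) 0 := fun κ => by
    have := ((((hasDerivAt_id (0 : ℝ)).const_mul κ).const_sub 1).inv (by simp)).const_mul κ
    simpa [div_eq_mul_inv, sq] using this
  exact (((hinv κA).const_mul lam).fun_add ((hinv κH).const_mul (1 - lam))).fun_neg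

theorem tendsto_sq_mul_exp_logGeomMean {ι : Type*} {l : Filter ι} {c t : ι → ℝ} {w : ℝ}
    (ht : Tendsto t l (𝓝 0)) (hct : Tendsto (fun n => c n * t n) l (𝓝 w)) :
    Tendsto (fun n => c n ^ 2 *
        (exp (logGeomMean κA κH lam (t n)) - (1 - (lam * κA + (1 - lam) * κH) * t n))) l
      (𝓝 (w ^ 2 *
        (((lam * κA + (1 - lam) * κH) ^ 2 - (lam * κA ^ 2 + (1 - lam) * κH ^ 2)) / 2))) := by
  have hne : ∀ κ : ℝ, ∀ᶠ x in 𝓝 (0 : ℝ), 1 - κ * x ≠ 0 := fun κ =>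
    (continuous_const.sub (continuous_const.mul continuous_id)).continuousAt.eventually_ne
      (by simp)
  have hf : ∀ᶠ x in 𝓝 (0 : ℝ), HasDerivAt (fun y => exp (logGeomMean κA κH lam y))
      (exp (logGeomMean κA κH lam x) *
        -(lam * (κA / (1 - κA * x)) + (1 - lam) * (κH / (1 - κH * x)))) x := by
    filter_upwards [hne κA, hne κH] with x hA hH
    exact (hasDerivAt_logGeomMean hA hH).exp
  have hf' := ((hasDerivAt_logGeomMean (κA := κA) (κH := κH) (lam := lam) (by simp)
    (by simp)).exp).fun_mul (hasDerivAt_deriv_logGeomMean_zero (κA := κA) (κH := κH) (lam := lam))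
  convert tendsto_sq_mul_taylor_two hf hf' ht hct using 3 <;>
    simp only [logGeomMean_zero, exp_zero, mul_zero, sub_zero, div_one, one_mul] <;> ring

theorem tendsto_sq_mul_geomMean_sub_arithMean {s : ℝ} (hs : 0 < s) :
    Tendsto (fun m : ℕ => (m : ℝ) ^ 2 *
        ((1 - κA / (s * m)) ^ lam * (1 - κH / (s * m)) ^ (1 - lam) -
          (lam * (1 - κA / (s * m)) + (1 - lam) * (1 - κH / (s * m))))) atTop
      (𝓝 (((lam * κA + (1 - lam) * κH) ^ 2 - (lam * κA ^ 2 + (1 - lam) * κH ^ 2)) /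
        (2 * s ^ 2))) := by
  have hε : Tendsto (fun m : ℕ => 1 / (s * m)) atTop (𝓝 0) :=
    tendsto_const_nhds.div_atTop (tendsto_natCast_atTop_atTop.const_mul_atTop hs)
  have hmε : Tendsto (fun m : ℕ => (m : ℝ) * (1 / (s * m))) atTop (𝓝 (1 / s)) := by
    refine tendsto_const_nhds.congr' ?_
    filter_upwards [eventually_ne_atTop 0] with m hm
    field_simp
  have hpos : ∀ κ, ∀ᶠ m : ℕ in atTop, 0 < 1 - κ * (1 / (s * m)) := fun κ =>
    ((hε.const_mul κ).const_sub 1).eventually (lt_mem_nhds (by simp))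
  convert (tendsto_sq_mul_exp_logGeomMean (κA := κA) (κH := κH) (lam := lam) hε hmε).congr' ?_
    using 2
  · field_simp
  · filter_upwards [hpos κA, hpos κH] with m hA hH
    rw [exp_logGeomMean hA hH]
    simp only [mul_one_div]
    ring

end logGeomMean

-- A convex function on `[0, ∞)` that is negative at `0` changes sign at most once there.
theorem tendsto_root_of_convexOn {ι : Type*} {l : Filter ι} {H : ι → ℝ → ℝ} {u : ι → ℝ}
    {a : ℝ} (ha : 0 < a) (hconv : ∀ᶠ n in l, ConvexOn ℝ (Ici 0) (H n))
    (hroot : ∀ᶠ n in l, 0 ≤ u n ∧ H n (u n) = 0)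
    (hneg : ∀ v ∈ Ico 0 a, ∀ᶠ n in l, H n v < 0)
    (hpos : ∀ v, a < v → ∀ᶠ n in l, 0 < H n v) :
    Tendsto u l (𝓝 a) := by
  have hle_max : ∀ᶠ n in l,
      ∀ ⦃x y z⦄, 0 ≤ x → x ≤ z → z ≤ y → H n z ≤ max (H n x) (H n y) := by
    filter_upwards [hconv] with n hn x y z hx hxz hzy
    refine hn.le_on_segment hx (hx.trans (hxz.trans hzy)) ?_
    rw [segment_eq_Icc (hxz.trans hzy)]
    exact ⟨hxz, hzy⟩
  refine tendsto_order.2 ⟨fun b hb => ?_, fun b hb => ?_⟩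
  · have hb' : max b 0 ∈ Ico 0 a := ⟨le_max_right _ _, max_lt hb ha⟩
    filter_upwards [hle_max, hroot, hneg 0 ⟨le_rfl, ha⟩, hneg _ hb']
      with n hn ⟨hu, hHu⟩ h0 hb0
    by_contra! hub
    have := hn le_rfl hu (hub.trans (le_max_left b 0))
    rw [hHu] at this
    exact this.not_gt (max_lt h0 hb0)
  · filter_upwards [hle_max, hroot, hneg 0 ⟨le_rfl, ha⟩, hpos b hb]
      with n hn ⟨hu, hHu⟩ h0 hb0
    by_contra! hub
    have := hn le_rfl (ha.trans hb).le hub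
    rw [hHu] at this
    exact this.not_gt (max_lt (h0.trans hb0) hb0)

theorem convexOn_mul_exp_mul_add {b : ℝ} (hb : 0 ≤ b) (c d e : ℝ) :
    ConvexOn ℝ univ (fun v => b * exp (c * v) + d * v + e) := by
  have hexp : ConvexOn ℝ univ (fun v => exp (c * v)) :=
    convexOn_exp.comp_linearMap (LinearMap.mulLeft ℝ c)
  refine (((hexp.smul hb).add ((LinearMap.mulLeft ℝ d).convexOn convex_univ)).add_const e).congr
    fun v _ => ?_
  simp

theorem tendsto_zero_of_tendsto_natCast_mul {y : ℕ → ℝ} {L : ℝ}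
    (h : Tendsto (fun m : ℕ => (m : ℝ) * y m) atTop (𝓝 L)) : Tendsto y atTop (𝓝 0) := by
  have := h.mul tendsto_inv_atTop_nhds_zero_nat
  rw [mul_zero] at this
  refine this.congr' ?_
  filter_upwards [eventually_ne_atTop 0] with m hm
  field_simp

section FixedPoint

variable {q β x : ℕ → ℝ} {A ρ : ℝ}

theorem tendsto_natCast_mul_one_sub_of_sq {B : ℝ}
    (hβ : Tendsto (fun m : ℕ => (m : ℝ) * (1 - β m)) atTop (𝓝 A))
    (hqβ : Tendsto (fun m : ℕ => (m : ℝ) ^ 2 * (q m - β m)) atTop (𝓝 B)) :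
    Tendsto (fun m : ℕ => (m : ℝ) * (1 - q m)) atTop (𝓝 A) := by
  have := hβ.sub (hqβ.mul tendsto_inv_atTop_nhds_zero_nat)
  rw [mul_zero, sub_zero] at this
  refine this.congr' ?_
  filter_upwards [eventually_ne_atTop 0] with m hm
  field_simp
  ring

theorem tendsto_sq_mul_exp_neg_div_sub {B : ℝ}
    (hqA : Tendsto (fun m : ℕ => (m : ℝ) * (1 - q m)) atTop (𝓝 A))
    (hqβ : Tendsto (fun m : ℕ => (m : ℝ) ^ 2 * (q m - β m)) atTop (𝓝 B)) (v : ℝ) :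
    Tendsto (fun m : ℕ => (m : ℝ) ^ 2 * (q m * exp (-v / m) - β m + v / m)) atTop
      (𝓝 (v ^ 2 / 2 + A * v + B)) := by
  have hexp := tendsto_sq_mul_taylor_two (f := exp) (f' := exp) (c := fun m : ℕ => (m : ℝ))
    (t := fun m : ℕ => -v / m) (.of_forall hasDerivAt_exp) (hasDerivAt_exp 0)
    (tendsto_const_nhds.div_atTop tendsto_natCast_atTop_atTop)
    (tendsto_const_nhds.congr' (f₁ := fun _ => -v) <| by
      filter_upwards [eventually_ne_atTop 0] with m hm
      field_simp)
  have hq1 : Tendsto q atTop (𝓝 1) := by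
    simpa using (tendsto_zero_of_tendsto_natCast_mul hqA).const_sub 1
  convert (((hq1.mul hexp).add (hqA.mul_const v)).add hqβ).congr' ?_ using 2
  · simp only [exp_zero]
    ring
  · filter_upwards [eventually_ne_atTop 0] with m hm
    simp only [exp_zero]
    field_simp
    ring

theorem tendsto_natCast_mul_fixedPoint
    (hqA : Tendsto (fun m : ℕ => (m : ℝ) * (1 - q m)) atTop (𝓝 A))
    (hqβ : Tendsto (fun m : ℕ => (m : ℝ) ^ 2 * (q m - β m)) atTop
      (𝓝 ((A ^ 2 - ρ ^ 2) / 2)))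
    (hρ : |A| < ρ) (hx : ∀ᶠ m in atTop, x m ≤ 0 ∧ q m * exp (x m) - β m = x m) :
    Tendsto (fun m : ℕ => (m : ℝ) * x m) atTop (𝓝 (A - ρ)) := by
  obtain ⟨hAρ, hρA⟩ := abs_lt.1 hρ
  have hq : ∀ᶠ m in atTop, 0 ≤ q m := by
    have hq1 : Tendsto q atTop (𝓝 1) := by
      simpa using (tendsto_zero_of_tendsto_natCast_mul hqA).const_sub 1
    exact (hq1.eventually (lt_mem_nhds zero_lt_one)).mono fun _ h => h.le
  suffices hu : Tendsto (fun m : ℕ => -(m * x m)) atTop (𝓝 (ρ - A)) by simpa using hu.neg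
  refine tendsto_root_of_convexOn
    (H := fun (m : ℕ) v => (m : ℝ) ^ 2 * (q m * exp (-v / m) - β m + v / m)) (by linarith)
    ?_ ?_ ?_ ?_
  · filter_upwards [hq, eventually_ne_atTop 0] with m hqm hm
    refine ((convexOn_mul_exp_mul_add (mul_nonneg (sq_nonneg (m : ℝ)) hqm) (-(m : ℝ)⁻¹)
      (m : ℝ) ((m : ℝ) ^ 2 * -β m)).congr fun v _ => ?_).subset (subset_univ _) (convex_Ici 0)
    field_simp
    ring_nf
  · filter_upwards [hx, eventually_ne_atTop 0] with m ⟨hxm, hfix⟩ hm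
    have hm' : (m : ℝ) ≠ 0 := Nat.cast_ne_zero.2 hm
    refine ⟨neg_nonneg.2 (mul_nonpos_of_nonneg_of_nonpos m.cast_nonneg hxm), ?_⟩
    simp [neg_div, mul_div_cancel_left₀ _ hm', hfix]
  · intro v hv
    refine (tendsto_sq_mul_exp_neg_div_sub hqA hqβ v).eventually (gt_mem_nhds ?_)
    nlinarith [hv.1, hv.2]
  · intro v hv
    refine (tendsto_sq_mul_exp_neg_div_sub hqA hqβ v).eventually (lt_mem_nhds ?_)
    nlinarith

theorem fixedPoint_asymptotics
    (hβ : Tendsto (fun m : ℕ => (m : ℝ) * (1 - β m)) atTop (𝓝 A))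
    (hqβ : Tendsto (fun m : ℕ => (m : ℝ) ^ 2 * (q m - β m)) atTop
      (𝓝 ((A ^ 2 - ρ ^ 2) / 2)))
    (hρ : |A| < ρ) (hx : ∀ᶠ m in atTop, x m < 0 ∧ q m * exp (x m) - β m = x m) :
    Tendsto (fun m : ℕ => (m : ℝ) * (1 - q m)) atTop (𝓝 A) ∧
    Tendsto (fun m : ℕ => (m : ℝ) * x m) atTop (𝓝 (A - ρ)) ∧
    Tendsto (fun m : ℕ => (m : ℝ) ^ 2 * (q m / 2 * exp (x m) * x m ^ 2)) atTop
      (𝓝 ((A - ρ) ^ 2 / 2)) ∧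
    Tendsto (fun m : ℕ => (m : ℝ) * (1 - (x m - (q m - β m)) / x m)) atTop
      (𝓝 ((A + ρ) / 2)) ∧
    Tendsto (fun m : ℕ => (m : ℝ) * (1 - q m * exp (x m))) atTop (𝓝 ρ) ∧
    Tendsto (fun m : ℕ => (m : ℝ) ^ 2 * x m * (1 - q m * exp (x m))) atTop
      (𝓝 ((A - ρ) * ρ)) := by
  have hqA := tendsto_natCast_mul_one_sub_of_sq hβ hqβ
  have hmx := tendsto_natCast_mul_fixedPoint hqA hqβ hρ (hx.mono fun m h => ⟨h.1.le, h.2⟩)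
  have hd : Tendsto (fun m : ℕ => (m : ℝ) * (1 - q m * exp (x m))) atTop (𝓝 ρ) := by
    convert (hβ.sub hmx).congr' ?_ using 2
    · ring
    · filter_upwards [hx] with m hxm
      linear_combination (m : ℝ) * hxm.2
  have hd1 : Tendsto (fun m : ℕ => q m * exp (x m)) atTop (𝓝 1) := by
    simpa using (tendsto_zero_of_tendsto_natCast_mul hd).const_sub 1
  refine ⟨hqA, hmx, ?_, ?_, hd, (hmx.mul hd).congr fun m => by ring⟩
  · convert ((hd1.mul hmx).mul hmx).div_const 2 using 2 with m
    · ring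
    · ring
  · have hAρ : A - ρ ≠ 0 := by linarith [le_abs_self A]
    convert (hqβ.div hmx hAρ).congr' ?_ using 2
    · rw [eq_div_iff hAρ]
      ring
    · filter_upwards [hx, eventually_ne_atTop 0] with m hxm hm
      simp only [Pi.div_apply]
      field_simp [hxm.1.ne]
      ring

end FixedPoint

theorem abs_convexComb_lt_sqrt_convexComb_sq {a b lam : ℝ} (hab : a ≠ b)
    (hlam : lam ∈ Ioo 0 1) :
    |lam * a + (1 - lam) * b| < √(lam * a ^ 2 + (1 - lam) * b ^ 2) := by
  obtain ⟨h0, h1⟩ := hlam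
  have hgap : 0 < lam * (1 - lam) * (a - b) ^ 2 :=
    mul_pos (mul_pos h0 (sub_pos.2 h1)) (sq_pos_iff.2 (sub_ne_zero.2 hab))
  rw [lt_sqrt (abs_nonneg _), sq_abs]
  linarith

theorem diffusion_approx_limits_general (σ κA κH lam : ℝ)
    (hσ : 0 < σ) (hκ : κA ≠ κH)
    (hlam : lam ∈ Set.Ioo (0 : ℝ) 1)
    (κl Λl : ℝ) (hκl : κl = lam * κA + (1 - lam) * κH)
    (hΛl : Λl = Real.sqrt (lam * κA ^ 2 + (1 - lam) * κH ^ 2))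
    (βAm βHm qm βlm : ℕ → ℝ)
    (hβAm : ∀ m : ℕ, βAm m = 1 - κA / (σ ^ 2 * (m : ℝ)))
    (hβHm : ∀ m : ℕ, βHm m = 1 - κH / (σ ^ 2 * (m : ℝ)))
    (hqm : ∀ m : ℕ, qm m = (βAm m) ^ lam * (βHm m) ^ (1 - lam))
    (hβlm : ∀ m : ℕ, βlm m = lam * βAm m + (1 - lam) * βHm m)
    (x₀ : ℕ → ℝ)
    (hx₀ : ∀ m : ℕ, max κA κH < σ ^ 2 * (m : ℝ) →
      x₀ m < 0 ∧ qm m * Real.exp (x₀ m) - βlm m = x₀ m) :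
    Tendsto (fun m : ℕ => (m : ℝ) * (1 - qm m)) atTop (nhds (κl / σ ^ 2)) ∧
    (Tendsto (fun m : ℕ => (m : ℝ) ^ 2 * (qm m - βlm m)) atTop
        (nhds (-(Λl ^ 2 - κl ^ 2) / (2 * σ ^ 4))) ∧
      Tendsto (fun m : ℕ => (m : ℝ) * (1 - βlm m)) atTop (nhds (κl / σ ^ 2))) ∧
    (Tendsto (fun m : ℕ => (m : ℝ) * x₀ m) atTop (nhds (-(Λl - κl) / σ ^ 2)) ∧
      Tendsto (fun m : ℕ => (m : ℝ) ^ 2 * (qm m / 2 * Real.exp (x₀ m) * (x₀ m) ^ 2)) atTop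
        (nhds ((Λl - κl) ^ 2 / (2 * σ ^ 4)))) ∧
    Tendsto (fun m : ℕ => (m : ℝ) * (1 - (x₀ m - (qm m - βlm m)) / x₀ m)) atTop
      (nhds ((Λl + κl) / (2 * σ ^ 2))) ∧
    (Tendsto (fun m : ℕ => (m : ℝ) * (1 - qm m * Real.exp (x₀ m))) atTop
        (nhds (Λl / σ ^ 2)) ∧
      Tendsto (fun m : ℕ => (m : ℝ) ^ 2 * x₀ m * (1 - qm m * Real.exp (x₀ m))) atTop
        (nhds (-Λl * (Λl - κl) / σ ^ 4))) := by
  obtain ⟨hl0, hl1⟩ := hlam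
  have hσ2 : 0 < σ ^ 2 := by positivity
  have hβlim : Tendsto (fun m : ℕ => (m : ℝ) * (1 - βlm m)) atTop (𝓝 (κl / σ ^ 2)) := by
    refine tendsto_const_nhds.congr' ?_
    filter_upwards [eventually_ne_atTop 0] with m hm
    simp only [hβlm, hβAm, hβHm, hκl]
    field_simp
    ring
  have hqβ : Tendsto (fun m : ℕ => (m : ℝ) ^ 2 * (qm m - βlm m)) atTop
      (𝓝 (((κl / σ ^ 2) ^ 2 - (Λl / σ ^ 2) ^ 2) / 2)) := by
    have hΛ2 : Λl ^ 2 = lam * κA ^ 2 + (1 - lam) * κH ^ 2 := by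
      rw [hΛl, sq_sqrt]
      exact add_nonneg (mul_nonneg hl0.le (sq_nonneg _))
        (mul_nonneg (sub_pos.2 hl1).le (sq_nonneg _))
    simp only [hqm, hβlm, hβAm, hβHm]
    convert tendsto_sq_mul_geomMean_sub_arithMean hσ2 using 2
    rw [hκl, ← hΛ2]
    field_simp
  have hρ : |κl / σ ^ 2| < Λl / σ ^ 2 := by
    rw [abs_div, abs_of_pos hσ2, hκl, hΛl]
    exact div_lt_div_of_pos_right (abs_convexComb_lt_sqrt_convexComb_sq hκ ⟨hl0, hl1⟩) hσ2
  obtain ⟨ha, hc1, hc2, hd, he1, he2⟩ := fixedPoint_asymptotics hβlim hqβ hρ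
    (((tendsto_natCast_atTop_atTop.const_mul_atTop hσ2).eventually_gt_atTop _).mono hx₀)
  refine ⟨ha, ⟨?_, hβlim⟩, ⟨?_, ?_⟩, ?_, he1, ?_⟩
  · convert hqβ using 2; ring
  · convert hc1 using 2; ring
  · convert hc2 using 2; ring
  · convert hd using 2; ring
  · convert he2 using 2; ring

/-- Asymptotics of the quantities appearing in the diffusion
approximation: with `β_•^{(m)} = 1 − κ_•/(σ²m)`, `q_λ^{(m)} = (β_A^{(m)})^λ (β_H^{(m)})^{1−λ}`,
`β_λ^{(m)} = λβ_A^{(m)} + (1−λ)β_H^{(m)}`, `x₀^{(m)}` the unique negative fixed point of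
`x ↦ q_λ^{(m)} e^x − β_λ^{(m)}`, `Γ^{(m)} = (q_λ^{(m)}/2) e^{x₀^{(m)}} (x₀^{(m)})²`,
`d^{(m),T} = q_λ^{(m)} e^{x₀^{(m)}}` and
`d^{(m),S} = (x₀^{(m)} − (q_λ^{(m)} − β_λ^{(m)}))/x₀^{(m)}`, the limits (a)–(e) hold as
`m → ∞`, with `κ_λ = λκ_A + (1−λ)κ_H` and `Λ_λ = √(λκ_A² + (1−λ)κ_H²)`. -/
theorem diffusion_approx_limits (σ η κA κH lam : ℝ)
    (hσ : 0 < σ) (hη : 0 ≤ η) (hκA : 0 ≤ κA) (hκH : 0 ≤ κH) (hκ : κA ≠ κH)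
    (hlam : lam ∈ Set.Ioo (0 : ℝ) 1)
    (κl Λl : ℝ) (hκl : κl = lam * κA + (1 - lam) * κH)
    (hΛl : Λl = Real.sqrt (lam * κA ^ 2 + (1 - lam) * κH ^ 2))
    (βAm βHm qm βlm : ℕ → ℝ)
    (hβAm : ∀ m : ℕ, βAm m = 1 - κA / (σ ^ 2 * (m : ℝ)))
    (hβHm : ∀ m : ℕ, βHm m = 1 - κH / (σ ^ 2 * (m : ℝ)))
    (hqm : ∀ m : ℕ, qm m = (βAm m) ^ lam * (βHm m) ^ (1 - lam))
    (hβlm : ∀ m : ℕ, βlm m = lam * βAm m + (1 - lam) * βHm m)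
    (x₀ : ℕ → ℝ)
    (hx₀ : ∀ m : ℕ, max κA κH < σ ^ 2 * (m : ℝ) →
      x₀ m < 0 ∧ qm m * Real.exp (x₀ m) - βlm m = x₀ m) :
    Tendsto (fun m : ℕ => (m : ℝ) * (1 - qm m)) atTop (nhds (κl / σ ^ 2)) ∧
    (Tendsto (fun m : ℕ => (m : ℝ) ^ 2 * (qm m - βlm m)) atTop
        (nhds (-(Λl ^ 2 - κl ^ 2) / (2 * σ ^ 4))) ∧
      Tendsto (fun m : ℕ => (m : ℝ) * (1 - βlm m)) atTop (nhds (κl / σ ^ 2))) ∧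
    (Tendsto (fun m : ℕ => (m : ℝ) * x₀ m) atTop (nhds (-(Λl - κl) / σ ^ 2)) ∧
      Tendsto (fun m : ℕ => (m : ℝ) ^ 2 * (qm m / 2 * Real.exp (x₀ m) * (x₀ m) ^ 2)) atTop
        (nhds ((Λl - κl) ^ 2 / (2 * σ ^ 4)))) ∧
    Tendsto (fun m : ℕ => (m : ℝ) * (1 - (x₀ m - (qm m - βlm m)) / x₀ m)) atTop
      (nhds ((Λl + κl) / (2 * σ ^ 2))) ∧
    (Tendsto (fun m : ℕ => (m : ℝ) * (1 - qm m * Real.exp (x₀ m))) atTop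
        (nhds (Λl / σ ^ 2)) ∧
      Tendsto (fun m : ℕ => (m : ℝ) ^ 2 * x₀ m * (1 - qm m * Real.exp (x₀ m))) atTop
        (nhds (-Λl * (Λl - κl) / σ ^ 4))) :=
  diffusion_approx_limits_general σ κA κH lam hσ hκ hlam κl Λl hκl hΛl βAm βHm qm βlm hβAm hβHm hqm
    hβlm x₀ hx₀
end

section
/- Let the parameters lie in P_NI ∪ P_SP,1 (equivalently, α_H·β_A − α_A·β_H = 0 with (β_A,α_A) ≠ (β_H,α_H)). Then for every initial size ω₀ ≥ 1 and every horizon n ≥ 1, the relative entropy I_n has the exact value: if β_A ≠ 1, I_n = ((β_A·(log(β_A/β_H) − 1) + β_H)/(1 − β_A))·(ω₀ − α_A/(1 − β_A))·(1 − β_A^n) + (α_A·(β_A·(log(β_A/β_H) − 1) + β_H)/(β_A·(1 − β_A)))·n; if β_A = 1, I_n = (β_H − log β_H − 1)·( (α_A/2)·n² + (ω₀ + α_A/2)·n ). -/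
open Real Filter

/-- One transition weight of the Poisson Galton–Watson process with immigration:
probability that the next generation size is `y` given the previous size is `x`. -/
noncomputable def gwStep (β α : ℝ) (x y : ℕ) : ℝ :=
  Real.exp (-(β * (x : ℝ) + α)) * (β * (x : ℝ) + α) ^ y / (Nat.factorial y : ℝ)

/-- The `n`-step path law (pmf on `Fin n → ℕ`) with initial generation size `ω₀`. -/
noncomputable def gwPath (β α : ℝ) (ω₀ n : ℕ) (ω : Fin n → ℕ) : ℝ :=
  ∏ k : Fin n,
    gwStep β α
      (if (k : ℕ) = 0 then ω₀ else ω ⟨(k : ℕ) - 1, Nat.lt_of_le_of_lt (Nat.sub_le _ _) k.2⟩)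
      (ω k)

/-- Relative entropy between the `n`-step path laws (summands with vanishing
`p_A` contribute `0`, since they are multiplied by `p_A`). -/
noncomputable def relEnt (βA αA βH αH : ℝ) (ω₀ n : ℕ) : ℝ :=
  ∑' ω : Fin n → ℕ,
    gwPath βA αA ω₀ n ω * Real.log (gwPath βA αA ω₀ n ω / gwPath βH αH ω₀ n ω)

/-! The intensities `λ(x) = β x + α` of `H` are those of `A` scaled by `r = β_H / β_A`, so
the likelihood ratio of a path is `exp (-(r - 1) ∑ₖ λ_A(ω_{k-1})) · r ^ (∑ₖ ωₖ)` and its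
logarithm is affine in the generation sizes. The means `mₖ = E_A ωₖ` satisfy
`m_{k+1} = β_A mₖ + α_A = E_A λ_A(ωₖ)`, so the relative entropy is
`(r - 1 - log r) ∑_{k=1}^n mₖ`: a geometric sum, or an arithmetic one when `β_A = 1`. -/

open Finset

section Poisson

variable {l : ℝ}

lemma hasSum_poisson (hl : 0 ≤ l) :
    HasSum (fun y : ℕ => exp (-l) * l ^ y / (Nat.factorial y : ℝ)) 1 := by
  simpa [Real.coe_toNNReal l hl] using ProbabilityTheory.hasSum_one_poissonMeasure l.toNNReal

lemma hasSum_poisson_mul_self (hl : 0 ≤ l) :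
    HasSum (fun y : ℕ => exp (-l) * l ^ y / (Nat.factorial y : ℝ) * y) l := by
  have hshift : (fun y : ℕ =>
      exp (-l) * l ^ (y + 1) / (Nat.factorial (y + 1) : ℝ) * ((y + 1 : ℕ) : ℝ))
      = fun y : ℕ => l * (exp (-l) * l ^ y / (Nat.factorial y : ℝ)) := by
    funext y
    rw [Nat.factorial_succ]
    push_cast
    field_simp
    ring
  have h := (hasSum_poisson hl).mul_left l
  rw [mul_one, ← hshift] at h
  simpa using (hasSum_nat_add_iff (f := fun y : ℕ =>
    exp (-l) * l ^ y / (Nat.factorial y : ℝ) * y) 1).mp h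

lemma poisson_mul_eq (r : ℝ) (y : ℕ) :
    exp (-(r * l)) * (r * l) ^ y / (Nat.factorial y : ℝ)
      = exp (-((r - 1) * l)) * r ^ y * (exp (-l) * l ^ y / (Nat.factorial y : ℝ)) := by
  rw [mul_pow, show -(r * l) = -((r - 1) * l) + -l by ring, exp_add]
  ring

end Poisson

lemma hasSum_prod_of_nonneg {ι κ : Type*} {f : ι × κ → ℝ} {t : ι → ℝ} {s : ℝ} (hf : 0 ≤ f)
    (hfib : ∀ i, HasSum (fun j => f (i, j)) (t i)) (ht : HasSum t s) : HasSum f s := by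
  have hsum : Summable f := by
    rw [summable_prod_of_nonneg hf]
    exact ⟨fun i => (hfib i).summable, by simpa only [fun i => (hfib i).tsum_eq] using ht.summable⟩
  have hval : ∑' p, f p = s := by
    rw [hsum.tsum_prod' fun i => (hfib i).summable]
    simpa only [fun i => (hfib i).tsum_eq] using ht.tsum_eq
  exact hval ▸ hsum.hasSum

section Path

variable {β α : ℝ}

lemma gwStep_nonneg (hβ : 0 ≤ β) (hα : 0 ≤ α) (x y : ℕ) : 0 ≤ gwStep β α x y := by
  unfold gwStep; positivity

lemma hasSum_gwStep (hβ : 0 ≤ β) (hα : 0 ≤ α) (x : ℕ) : HasSum (gwStep β α x) 1 :=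
  hasSum_poisson (by positivity)

lemma hasSum_gwStep_mul_self (hβ : 0 ≤ β) (hα : 0 ≤ α) (x : ℕ) :
    HasSum (fun y : ℕ => gwStep β α x y * y) (β * x + α) :=
  hasSum_poisson_mul_self (by positivity)

lemma gwStep_mul_mul (r : ℝ) (x y : ℕ) :
    gwStep (r * β) (r * α) x y = exp (-((r - 1) * (β * x + α))) * r ^ y * gwStep β α x y := by
  rw [gwStep, gwStep, ← poisson_mul_eq, mul_assoc, ← mul_add]

lemma gwPath_eq_prod (x n : ℕ) (ω : Fin n → ℕ) :
    gwPath β α x n ω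
      = ∏ k : Fin n, gwStep β α ((Fin.cons x ω : Fin (n + 1) → ℕ) k.castSucc) (ω k) := by
  refine prod_congr rfl fun ⟨k, hk⟩ _ => ?_
  cases k <;> simp [Fin.cons]

lemma gwPath_cons (x y : ℕ) {n : ℕ} (ω : Fin n → ℕ) :
    gwPath β α x (n + 1) (Fin.cons y ω) = gwStep β α x y * gwPath β α y n ω := by
  rw [gwPath_eq_prod, gwPath_eq_prod, Fin.prod_univ_succ]
  simp only [Fin.castSucc_zero, Fin.cons_zero, Fin.cons_succ, Fin.castSucc_succ]

lemma gwPath_nonneg (hβ : 0 ≤ β) (hα : 0 ≤ α) (x n : ℕ) : 0 ≤ gwPath β α x n :=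
  fun _ => prod_nonneg fun _ _ => gwStep_nonneg hβ hα _ _

lemma hasSum_gwPath_succ_mul (hβ : 0 ≤ β) (hα : 0 ≤ α) {x n : ℕ}
    {g : (Fin (n + 1) → ℕ) → ℝ} {t : ℕ → ℝ} {s : ℝ} (hg : 0 ≤ g)
    (hfib : ∀ y, HasSum (fun ω => gwPath β α y n ω * g (Fin.cons y ω)) (t y))
    (ht : HasSum (fun y => gwStep β α x y * t y) s) :
    HasSum (fun ω => gwPath β α x (n + 1) ω * g ω) s := by
  refine (Fin.consEquiv fun _ => ℕ).hasSum_iff.mp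
    (hasSum_prod_of_nonneg (t := fun y => gwStep β α x y * t y) ?_ ?_ ht)
  · exact fun p => mul_nonneg (gwPath_nonneg hβ hα _ _ _) (hg _)
  · intro y
    have hcomp : (fun ω => gwPath β α x (n + 1) (Fin.cons y ω) * g (Fin.cons y ω))
        = fun ω => gwStep β α x y * (gwPath β α y n ω * g (Fin.cons y ω)) :=
      funext fun ω => by rw [gwPath_cons, mul_assoc]
    exact hcomp ▸ (hfib y).mul_left (gwStep β α x y)

lemma hasSum_gwPath (hβ : 0 ≤ β) (hα : 0 ≤ α) (x n : ℕ) : HasSum (gwPath β α x n) 1 := by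
  induction n generalizing x with
  | zero =>
    have h1 : gwPath β α x 0 = 1 := funext fun ω => by simp [gwPath_eq_prod]
    rw [h1]
    simpa using hasSum_fintype (1 : (Fin 0 → ℕ) → ℝ)
  | succ n ih =>
    simpa using hasSum_gwPath_succ_mul hβ hα (g := 1) (t := 1) zero_le_one
      (fun y => by simpa using ih y) (by simpa using hasSum_gwStep hβ hα x)

noncomputable def genMean (β α : ℝ) (x k : ℕ) : ℝ :=
  β ^ k * x + α * ∑ i ∈ range k, β ^ i

lemma genMean_zero (x : ℕ) : genMean β α x 0 = x := by simp [genMean]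

lemma genMean_succ (x k : ℕ) : genMean β α x (k + 1) = β * genMean β α x k + α := by
  rw [genMean, genMean, geom_sum_succ]; ring

lemma hasSum_gwStep_mul_genMean (hβ : 0 ≤ β) (hα : 0 ≤ α) (x k : ℕ) :
    HasSum (fun y => gwStep β α x y * genMean β α y k) (genMean β α x (k + 1)) := by
  have h := ((hasSum_gwStep_mul_self hβ hα x).mul_left (β ^ k)).add
    ((hasSum_gwStep hβ hα x).mul_left (α * ∑ i ∈ range k, β ^ i))
  have hfun : (fun y => gwStep β α x y * genMean β α y k) = fun y =>
      β ^ k * (gwStep β α x y * y) + (α * ∑ i ∈ range k, β ^ i) * gwStep β α x y :=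
    funext fun y => by unfold genMean; ring
  have hval : genMean β α x (k + 1) = β ^ k * (β * x + α) + (α * ∑ i ∈ range k, β ^ i) * 1 := by
    unfold genMean; rw [sum_range_succ]; ring
  exact hfun ▸ hval ▸ h

lemma hasSum_gwPath_mul_cons (hβ : 0 ≤ β) (hα : 0 ≤ α) (x n : ℕ) (j : Fin (n + 1)) :
    HasSum (fun ω => gwPath β α x n ω * ((Fin.cons x ω : Fin (n + 1) → ℕ) j : ℝ))
      (genMean β α x j) := by
  have hzero : ∀ (m x : ℕ),
      HasSum (fun ω => gwPath β α x m ω * ((Fin.cons x ω : Fin (m + 1) → ℕ) 0 : ℝ))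
        (genMean β α x 0) := fun m x => by
    simpa [genMean_zero] using (hasSum_gwPath hβ hα x m).mul_right (x : ℝ)
  induction n generalizing x with
  | zero => exact Fin.fin_one_eq_zero j ▸ hzero 0 x
  | succ n ih =>
    cases j using Fin.cases with
    | zero => exact hzero _ x
    | succ j =>
      refine hasSum_gwPath_succ_mul hβ hα (fun _ => Nat.cast_nonneg _) (fun y => ?_)
        (hasSum_gwStep_mul_genMean hβ hα x j)
      simpa only [Fin.cons_succ] using ih y j

section LikelihoodRatio

variable {x n : ℕ} (r : ℝ) (ω : Fin n → ℕ)

lemma gwPath_mul_mul :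
    gwPath (r * β) (r * α) x n ω
      = exp (-((r - 1) * ∑ k : Fin n, (β * ((Fin.cons x ω : Fin (n + 1) → ℕ) k.castSucc : ℝ) + α)))
        * r ^ (∑ k, ω k) * gwPath β α x n ω := by
  simp only [gwPath_eq_prod, gwStep_mul_mul, prod_mul_distrib, ← exp_sum, prod_pow_eq_pow_sum,
    mul_sum, sum_neg_distrib]

lemma log_gwPath_div_gwPath_mul_mul (hr : 0 < r) (h : gwPath β α x n ω ≠ 0) :
    log (gwPath β α x n ω / gwPath (r * β) (r * α) x n ω)
      = ∑ k, ((r - 1) * (β * ((Fin.cons x ω : Fin (n + 1) → ℕ) k.castSucc : ℝ) + α)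
          - ω k * log r) := by
  rw [gwPath_mul_mul, div_mul_cancel_right₀ h, log_inv,
    log_mul (exp_ne_zero _) (pow_ne_zero _ hr.ne'), log_exp, log_pow, sum_sub_distrib,
    ← mul_sum, ← sum_mul]
  push_cast
  ring

end LikelihoodRatio

theorem relEnt_mul_mul (hβ : 0 ≤ β) (hα : 0 ≤ α) {r : ℝ} (hr : 0 < r) (x n : ℕ) :
    relEnt β α (r * β) (r * α) x n = (r - 1 - log r) * ∑ k ∈ range n, genMean β α x (k + 1) := by
  set p := gwPath β α x n
  have hterm : ∀ ω, p ω * log (p ω / gwPath (r * β) (r * α) x n ω)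
      = ∑ k : Fin n, ((r - 1) * β * (p ω * ((Fin.cons x ω : Fin (n + 1) → ℕ) k.castSucc : ℝ))
          + (r - 1) * α * p ω - log r * (p ω * ((Fin.cons x ω : Fin (n + 1) → ℕ) k.succ : ℝ))) := by
    intro ω
    by_cases h : p ω = 0
    · simp [h]
    · rw [log_gwPath_div_gwPath_mul_mul r ω hr h, mul_sum]
      exact sum_congr rfl fun k _ => by rw [Fin.cons_succ]; ring
  have hsum := hasSum_sum (s := univ) fun (k : Fin n) _ =>
    (((hasSum_gwPath_mul_cons hβ hα x n k.castSucc).mul_left ((r - 1) * β)).add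
      ((hasSum_gwPath hβ hα x n).mul_left ((r - 1) * α))).sub
      ((hasSum_gwPath_mul_cons hβ hα x n k.succ).mul_left (log r))
  rw [relEnt, funext hterm, hsum.tsum_eq, mul_sum, ← Fin.sum_univ_eq_sum_range]
  refine sum_congr rfl fun k _ => ?_
  rw [Fin.val_castSucc, Fin.val_succ, genMean_succ]
  ring

end Path

section GeometricSums

variable {β : ℝ} (α : ℝ) (x : ℕ)

lemma genMean_of_ne_one (hβ : β ≠ 1) (k : ℕ) :
    genMean β α x k = β ^ k * (x - α / (1 - β)) + α / (1 - β) := by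
  have h1 : 1 - β ≠ 0 := sub_ne_zero.mpr hβ.symm
  rw [genMean, geom_sum_eq hβ]
  field_simp
  ring

lemma sum_genMean_succ_of_ne_one (hβ : β ≠ 1) (n : ℕ) :
    ∑ k ∈ range n, genMean β α x (k + 1)
      = β / (1 - β) * (x - α / (1 - β)) * (1 - β ^ n) + α / (1 - β) * n := by
  have h1 : 1 - β ≠ 0 := sub_ne_zero.mpr hβ.symm
  induction n with
  | zero => simp
  | succ n ih =>
    rw [sum_range_succ, ih, genMean_of_ne_one α x hβ]
    field_simp
    push_cast
    ring

lemma sum_genMean_succ_one (n : ℕ) :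
    ∑ k ∈ range n, genMean 1 α x (k + 1) = α / 2 * n ^ 2 + (x + α / 2) * n := by
  induction n with
  | zero => simp
  | succ n ih =>
    rw [sum_range_succ, ih]
    simp only [genMean, one_pow, sum_const, card_range, nsmul_eq_mul]
    push_cast
    ring

end GeometricSums

theorem relEnt_exact_value_general (βA βH αA αH : ℝ) (hβA : 0 < βA) (hβH : 0 < βH)
    (hclass : (αA = 0 ∧ αH = 0 ∧ βA ≠ βH) ∨
      (0 < αA ∧ 0 < αH ∧ βA ≠ βH ∧ αA ≠ αH ∧ βA / βH = αA / αH))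
    (ω₀ : ℕ) (n : ℕ) :
    (βA ≠ 1 → relEnt βA αA βH αH ω₀ n =
      ((βA * (Real.log (βA / βH) - 1) + βH) / (1 - βA)) * ((ω₀ : ℝ) - αA / (1 - βA))
          * (1 - βA ^ n)
        + (αA * (βA * (Real.log (βA / βH) - 1) + βH) / (βA * (1 - βA))) * (n : ℝ)) ∧
    (βA = 1 → relEnt βA αA βH αH ω₀ n =
      (βH - Real.log βH - 1) * ((αA / 2) * (n : ℝ) ^ 2 + ((ω₀ : ℝ) + αA / 2) * (n : ℝ))) := by
  obtain ⟨r, hr, rfl, rfl, hαA⟩ : ∃ r, 0 < r ∧ βH = r * βA ∧ αH = r * αA ∧ 0 ≤ αA := by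
    refine ⟨βH / βA, div_pos hβH hβA, by field_simp, ?_⟩
    rcases hclass with ⟨rfl, rfl, -⟩ | ⟨hαA, hαH, -, -, hratio⟩
    · simp
    · rw [div_eq_div_iff hβH.ne' hαH.ne'] at hratio
      exact ⟨by field_simp; linarith, hαA.le⟩
  have hC : βA * (log (βA / (r * βA)) - 1) + r * βA = βA * (r - 1 - log r) := by
    rw [div_mul_cancel_right₀ hβA.ne', log_inv]
    ring
  rw [hC, relEnt_mul_mul hβA.le hαA hr]
  refine ⟨fun h1 => ?_, fun h1 => ?_⟩
  · have h1' : 1 - βA ≠ 0 := sub_ne_zero.mpr (Ne.symm h1)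
    rw [sum_genMean_succ_of_ne_one αA ω₀ h1]
    field_simp
  · subst h1
    rw [sum_genMean_succ_one, mul_one]
    ring

/-- Closed-form exact value of the relative entropy on
`P_NI ∪ P_SP,1` (i.e. `α_H·β_A − α_A·β_H = 0` with `(β_A,α_A) ≠ (β_H,α_H)`). -/
theorem relEnt_exact_value (βA βH αA αH : ℝ) (hβA : 0 < βA) (hβH : 0 < βH)
    (hclass : (αA = 0 ∧ αH = 0 ∧ βA ≠ βH) ∨
      (0 < αA ∧ 0 < αH ∧ βA ≠ βH ∧ αA ≠ αH ∧ βA / βH = αA / αH))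
    (ω₀ : ℕ) (hω₀ : 1 ≤ ω₀) (n : ℕ) (hn : 1 ≤ n) :
    (βA ≠ 1 → relEnt βA αA βH αH ω₀ n =
      ((βA * (Real.log (βA / βH) - 1) + βH) / (1 - βA)) * ((ω₀ : ℝ) - αA / (1 - βA))
          * (1 - βA ^ n)
        + (αA * (βA * (Real.log (βA / βH) - 1) + βH) / (βA * (1 - βA))) * (n : ℝ)) ∧
    (βA = 1 → relEnt βA αA βH αH ω₀ n =
      (βH - Real.log βH - 1) * ((αA / 2) * (n : ℝ) ^ 2 + ((ω₀ : ℝ) + αA / 2) * (n : ℝ))) :=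
  relEnt_exact_value_general βA βH αA αH hβA hβH hclass ω₀ n
end
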